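/- arXiv:math/9710216 — 2 statements merged into one kernel-verified Lean document; each statement's English description precedes it below -/
import Mathlib

section
/- Amalgamation lemma: if κ ∈ K, s ≤^{apr}_κ t and s ≤^{pr}_κ v in Q, then t ∪ v ∈ Q, s ≤ t ∪ v, t ≤^{pr}_κ t ∪ v, and v ≤^{apr}_κ t ∪ v. In particular, dom(t) \ dom(s) and dom(v) \ dom(s) are disjoint. -/
open Cardinal Set

noncomputable section

attribute [local instance] Classical.propDecidable

/-- A forcing condition: a partial `{0,1}`-valued function on ordinals,
coded as an `Option Bool`-valued function. -/
abbrev Cond : Type 1 := Ordinal → Option Bool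

/-- The domain of a condition. -/
def cdom (q : Cond) : Set Ordinal := {i | (q i).isSome}

/-- The `E_κ`-equivalence class of `i` : `j E_κ i` iff `j + κ = i + κ` (ordinal addition). -/
def Ecl (κ : Cardinal) (i : Ordinal) : Set Ordinal := {j | j + κ.ord = i + κ.ord}

/-- The `E_{<κ}`-class of `i`, where `E_{<κ} = id ∪ ⋃ {E_θ : θ ∈ K ∩ κ}`. -/
def EclLt (K : Set Cardinal) (κ : Cardinal) (i : Ordinal) : Set Ordinal :=
  {i} ∪ ⋃ θ ∈ K ∩ Set.Iio κ, Ecl θ i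

/-- `θ_κ` : the least regular cardinal `≥ sup((K ∩ κ) ∪ {λ})`. -/
def theta (lam : Cardinal) (K : Set Cardinal) (κ : Cardinal) : Cardinal :=
  sInf {θ : Cardinal | θ.IsRegular ∧ sSup ((K ∩ Set.Iio κ) ∪ {lam}) ≤ θ}

/-- `A` grows from `X` to `Y` : `∅ ≠ A ∩ X ≠ A ∩ Y`. -/
def grows (A X Y : Set Ordinal) : Prop := (A ∩ X).Nonempty ∧ A ∩ X ≠ A ∩ Y

/-- Membership in the forcing `Q = Q_K`. -/
def inQ (lam mu : Cardinal) (K : Set Cardinal) (q : Cond) : Prop :=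
  cdom q ⊆ Set.Iio mu.ord ∧
    ∀ i < mu.ord, ∀ κ ∈ K, #↥(Ecl κ i ∩ cdom q) < Cardinal.lift.{1} (theta lam K κ)

/-- The set of `E_κ`-classes which grow from `X` to `Y`. -/
def growClasses (mu : Cardinal) (κ : Cardinal) (X Y : Set Ordinal) : Set (Set Ordinal) :=
  {A | (∃ i < mu.ord, A = Ecl κ i) ∧ grows A X Y}

/-- The forcing order: `p ⊆ q` and for each `κ ∈ K`, fewer than `θ_κ` many
`E_κ`-classes grow from `dom p` to `dom q`. -/
def condLe (lam mu : Cardinal) (K : Set Cardinal) (p q : Cond) : Prop :=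
  (∀ i b, p i = some b → q i = some b) ∧
    ∀ κ ∈ K, #↥(growClasses mu κ (cdom p) (cdom q)) < Cardinal.lift.{1} (theta lam K κ)

/-- Pure extension at `κ`: no `E_κ`-class represented in `dom p` grows. -/
def condLePr (lam mu : Cardinal) (K : Set Cardinal) (κ : Cardinal) (p q : Cond) : Prop :=
  condLe lam mu K p q ∧ ∀ i : Ordinal, ¬ grows (Ecl κ i) (cdom p) (cdom q)

/-- Apure extension at `κ`: no new `E_κ`-classes are represented in `dom q`. -/
def condLeApr (lam mu : Cardinal) (K : Set Cardinal) (κ : Cardinal) (p q : Cond) : Prop :=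
  condLe lam mu K p q ∧ ∀ i ∈ cdom q, (Ecl κ i ∩ cdom p).Nonempty

/-- Union of two conditions (as partial functions, left priority). -/
def unionC (p q : Cond) : Cond := fun i => (p i).orElse (fun _ => q i)

/-- Restriction of a condition to a set of ordinals. -/
def restrictC (q : Cond) (X : Set Ordinal) : Cond := fun ξ => if ξ ∈ X then q ξ else none

/-- Union of a family of conditions indexed by ordinals below `θo`. -/
def unionFam (f : Ordinal → Cond) (θo : Ordinal) : Cond :=
  fun ξ => if h : ∃ i, i < θo ∧ (f i ξ).isSome then f h.choose ξ else none

/-- Compatibility in `Q`: existence of a common upper bound in `Q`. -/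
def compatQ (lam mu : Cardinal) (K : Set Cardinal) (q₁ q₂ : Cond) : Prop :=
  ∃ r : Cond, inQ lam mu K r ∧ condLe lam mu K q₁ r ∧ condLe lam mu K q₂ r

/-- Standing ground-model hypotheses: `λ = λ^{<λ}` regular, `μ = μ^λ` regular,
`K ⊆ [λ, μ]` a set of regular cardinals with `λ, μ ∈ K`. -/
def GroundCtx (lam mu : Cardinal) (K : Set Cardinal) : Prop :=
  lam.IsRegular ∧ lam ^< lam = lam ∧ mu.IsRegular ∧ mu ^ lam = mu ∧
    (∀ κ ∈ K, κ.IsRegular ∧ lam ≤ κ ∧ κ ≤ mu) ∧ lam ∈ K ∧ mu ∈ K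

/-! The new points of `v` lie in `E_κ`-classes avoiding `dom s` (as `v` is pure), while every
point of `t` is `E_κ`-equivalent to a point of `dom s` (as `t` is apure). Comparing `τ` with `κ`,
an `E_τ`-class meeting both `dom t` and `dom v \ dom s` must therefore meet `dom s`. Hence a class
that grows from `dom t` (or `dom v`) to `dom t ∪ dom v` already grows from `dom s` to `dom v`
(or `dom t`), and the bounds on growing classes carry over. -/

lemma mem_Ecl_self (κ : Cardinal) (i : Ordinal) : i ∈ Ecl κ i := rfl

lemma Ecl_eq_of_mem {κ : Cardinal} {i j : Ordinal} (h : j ∈ Ecl κ i) : Ecl κ j = Ecl κ i := by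
  ext m
  exact (congrArg (m + κ.ord = ·) h).to_iff

lemma Ecl_subset_Ecl {θ κ : Cardinal} (h : θ ≤ κ) (i : Ordinal) : Ecl θ i ⊆ Ecl κ i := by
  intro j (hj : j + θ.ord = i + θ.ord)
  have hd : θ.ord + (κ.ord - θ.ord) = κ.ord := Ordinal.add_sub_cancel_of_le (ord_le_ord.mpr h)
  change j + κ.ord = i + κ.ord
  rw [← hd, ← add_assoc, ← add_assoc, hj]

lemma grows_of_mem {A X Y : Set Ordinal} {j : Ordinal} (hX : (A ∩ X).Nonempty) (hjA : j ∈ A)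
    (hjY : j ∈ Y) (hjX : j ∉ X) : grows A X Y :=
  ⟨hX, fun h => hjX (h ▸ ⟨hjA, hjY⟩ : j ∈ A ∩ X).2⟩

lemma exists_mem_of_inter_ne_inter_union {α : Type*} {A T V : Set α}
    (h : A ∩ T ≠ A ∩ (T ∪ V)) : ∃ j ∈ A, j ∈ V ∧ j ∉ T := by
  contrapose! h
  ext j
  constructor
  · exact fun hj => ⟨hj.1, Or.inl hj.2⟩
  · rintro ⟨hjA, hjT | hjV⟩
    exacts [⟨hjA, hjT⟩, ⟨hjA, h j hjA hjV⟩]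

lemma grows_union {A X T V : Set Ordinal} (h : grows A X (T ∪ V)) :
    grows A X T ∨ grows A X V := by
  by_cases hT : A ∩ X = A ∩ T
  · exact Or.inr ⟨h.1, fun hV => h.2 (by rw [inter_union_distrib_left, ← hT, ← hV, union_self])⟩
  · exact Or.inl ⟨h.1, hT⟩

section Amalgamation

variable {κ τ : Cardinal} {X T V : Set Ordinal}

lemma not_Ecl_inter_nonempty_of_not_grows {j : Ordinal} (hpr : ¬ grows (Ecl κ j) X V)
    (hjV : j ∈ V) (hjX : j ∉ X) : ¬ (Ecl κ j ∩ X).Nonempty :=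
  fun hne => hpr (grows_of_mem hne (mem_Ecl_self κ j) hjV hjX)

lemma inter_subset_of_apr_of_pr (hapr : ∀ k ∈ T, (Ecl κ k ∩ X).Nonempty)
    (hpr : ∀ i, ¬ grows (Ecl κ i) X V) : T ∩ V ⊆ X := fun j ⟨hjT, hjV⟩ =>
  by_contra fun hjX => not_Ecl_inter_nonempty_of_not_grows (hpr j) hjV hjX (hapr j hjT)

lemma Ecl_inter_nonempty_of_apr_of_pr (hapr : ∀ k ∈ T, (Ecl κ k ∩ X).Nonempty)
    (hpr : ∀ i, ¬ grows (Ecl κ i) X V) {i j k : Ordinal} (hk : k ∈ Ecl τ i) (hkT : k ∈ T)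
    (hj : j ∈ Ecl τ i) (hjV : j ∈ V) (hjX : j ∉ X) : (Ecl τ i ∩ X).Nonempty := by
  obtain ⟨m, hmk, hmX⟩ := hapr k hkT
  rcases le_total κ τ with hκτ | hτκ
  · refine ⟨m, ?_, hmX⟩
    rw [← Ecl_eq_of_mem hk]
    exact Ecl_subset_Ecl hκτ k hmk
  · have hkj : k ∈ Ecl κ j := Ecl_subset_Ecl hτκ j (by rwa [Ecl_eq_of_mem hj])
    rw [Ecl_eq_of_mem hkj] at hmk
    exact absurd ⟨m, hmk, hmX⟩ (not_Ecl_inter_nonempty_of_not_grows (hpr j) hjV hjX)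

lemma grows_of_grows_union_left (hapr : ∀ k ∈ T, (Ecl κ k ∩ X).Nonempty)
    (hpr : ∀ i, ¬ grows (Ecl κ i) X V) (hXT : X ⊆ T) {i : Ordinal}
    (h : grows (Ecl τ i) T (T ∪ V)) : grows (Ecl τ i) X V := by
  obtain ⟨j, hj, hjV, hjT⟩ := exists_mem_of_inter_ne_inter_union h.2
  obtain ⟨k, hk, hkT⟩ := h.1
  have hjX : j ∉ X := fun hjX => hjT (hXT hjX)
  exact grows_of_mem (Ecl_inter_nonempty_of_apr_of_pr hapr hpr hk hkT hj hjV hjX) hj hjV hjX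

lemma grows_of_grows_union_right (hapr : ∀ k ∈ T, (Ecl κ k ∩ X).Nonempty)
    (hpr : ∀ i, ¬ grows (Ecl κ i) X V) (hXV : X ⊆ V) {i : Ordinal}
    (h : grows (Ecl τ i) V (T ∪ V)) : grows (Ecl τ i) X T := by
  rw [union_comm] at h
  obtain ⟨j, hj, hjT, hjV⟩ := exists_mem_of_inter_ne_inter_union h.2
  obtain ⟨k, hk, hkV⟩ := h.1
  have hjX : j ∉ X := fun hjX => hjV (hXV hjX)
  have hX : (Ecl τ i ∩ X).Nonempty := by
    by_cases hkX : k ∈ X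
    · exact ⟨k, hk, hkX⟩
    · exact Ecl_inter_nonempty_of_apr_of_pr hapr hpr hj hjT hk hkV hkX
  exact grows_of_mem hX hj hjT hjX

end Amalgamation

lemma growClasses_mono {mu τ : Cardinal} {X Y X' Y' : Set Ordinal}
    (h : ∀ i, grows (Ecl τ i) X Y → grows (Ecl τ i) X' Y') :
    growClasses mu τ X Y ⊆ growClasses mu τ X' Y' := by
  rintro A ⟨⟨i, hi, rfl⟩, hA⟩
  exact ⟨⟨i, hi, rfl⟩, h i hA⟩

lemma growClasses_union_subset (mu τ : Cardinal) (X T V : Set Ordinal) :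
    growClasses mu τ X (T ∪ V) ⊆ growClasses mu τ X T ∪ growClasses mu τ X V := by
  rintro A ⟨hA, hg⟩
  exact (grows_union hg).imp (⟨hA, ·⟩) (⟨hA, ·⟩)

lemma cdom_mono {p q : Cond} (h : ∀ i b, p i = some b → q i = some b) : cdom p ⊆ cdom q := by
  intro i (hi : (p i).isSome)
  obtain ⟨b, hb⟩ := Option.isSome_iff_exists.mp hi
  exact Option.isSome_iff_exists.mpr ⟨b, h i b hb⟩

lemma cdom_unionC (t v : Cond) : cdom (unionC t v) = cdom t ∪ cdom v := by
  ext i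
  simp only [cdom, unionC, mem_ofPred_eq, mem_union]
  cases t i <;> simp [Option.orElse]

lemma unionC_of_left {t v : Cond} {i : Ordinal} {b : Bool} (h : t i = some b) :
    unionC t v i = some b := by
  simp [unionC, h, Option.orElse]

lemma unionC_of_right {t v : Cond} (hagree : ∀ i ∈ cdom t ∩ cdom v, t i = v i) {i : Ordinal}
    {b : Bool} (h : v i = some b) : unionC t v i = some b := by
  cases ht : t i with
  | none => simp [unionC, ht, h, Option.orElse]
  | some c =>
    have hi : i ∈ cdom t ∩ cdom v := ⟨by simp [cdom, ht], by simp [cdom, h]⟩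
    exact unionC_of_left ((hagree i hi).trans h)

lemma theta_isRegular (lam : Cardinal) (K : Set Cardinal) (κ : Cardinal) :
    (theta lam K κ).IsRegular := by
  have hne : {θ : Cardinal | θ.IsRegular ∧ sSup ((K ∩ Iio κ) ∪ {lam}) ≤ θ}.Nonempty :=
    ⟨Order.succ (max (sSup ((K ∩ Iio κ) ∪ {lam})) ℵ₀), isRegular_succ (le_max_right _ _),
      (le_max_left _ _).trans (Order.le_succ _)⟩
  exact (csInf_mem hne).1

lemma mk_lt_lift_theta_of_subset_union {α : Type 1} {A B C : Set α} {lam : Cardinal.{0}}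
    {K : Set Cardinal} {κ : Cardinal} (h : A ⊆ B ∪ C) (hB : #B < lift.{1} (theta lam K κ))
    (hC : #C < lift.{1} (theta lam K κ)) : #A < lift.{1} (theta lam K κ) := by
  have hℵ₀ : ℵ₀ ≤ lift.{1} (theta lam K κ) := by
    simpa using lift_le.{1}.mpr (theta_isRegular lam K κ).aleph0_le
  exact ((mk_le_mk_of_subset h).trans (mk_union_le B C)).trans_lt (add_lt_of_lt hℵ₀ hB hC)

section Conditions

variable {lam mu : Cardinal} {K : Set Cardinal} {κ : Cardinal} {s t v : Cond}

lemma inQ_unionC (ht : inQ lam mu K t) (hv : inQ lam mu K v) : inQ lam mu K (unionC t v) := by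
  refine ⟨?_, fun i hi τ hτ => ?_⟩
  · rw [cdom_unionC]
    exact union_subset ht.1 hv.1
  · rw [cdom_unionC, inter_union_distrib_left]
    exact mk_lt_lift_theta_of_subset_union subset_rfl (ht.2 i hi τ hτ) (hv.2 i hi τ hτ)

lemma condLe_unionC (ht : condLe lam mu K s t) (hv : condLe lam mu K s v) :
    condLe lam mu K s (unionC t v) := by
  refine ⟨fun i b hb => unionC_of_left (ht.1 i b hb), fun τ hτ => ?_⟩
  rw [cdom_unionC]
  exact mk_lt_lift_theta_of_subset_union (growClasses_union_subset _ _ _ _ _) (ht.2 τ hτ)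
    (hv.2 τ hτ)

lemma condLe_of_growClasses_subset {p q p' q' : Cond}
    (hext : ∀ i b, p i = some b → q i = some b)
    (hsub : ∀ τ, growClasses mu τ (cdom p) (cdom q) ⊆ growClasses mu τ (cdom p') (cdom q'))
    (h : condLe lam mu K p' q') : condLe lam mu K p q :=
  ⟨hext, fun τ hτ => (mk_le_mk_of_subset (hsub τ)).trans_lt (h.2 τ hτ)⟩

lemma inter_cdom_subset_of_condLeApr_of_condLePr (ht : condLeApr lam mu K κ s t)
    (hv : condLePr lam mu K κ s v) : cdom t ∩ cdom v ⊆ cdom s :=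
  inter_subset_of_apr_of_pr ht.2 hv.2

lemma condLePr_unionC (ht : condLeApr lam mu K κ s t) (hv : condLePr lam mu K κ s v) :
    condLePr lam mu K κ t (unionC t v) := by
  have hgrows : ∀ τ i, grows (Ecl τ i) (cdom t) (cdom (unionC t v)) →
      grows (Ecl τ i) (cdom s) (cdom v) := fun τ i hg =>
    grows_of_grows_union_left ht.2 hv.2 (cdom_mono ht.1.1) (cdom_unionC t v ▸ hg)
  exact ⟨condLe_of_growClasses_subset (fun _ _ => unionC_of_left)
    (fun τ => growClasses_mono (hgrows τ)) hv.1, fun i hg => hv.2 i (hgrows κ i hg)⟩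

lemma condLeApr_unionC (ht : condLeApr lam mu K κ s t) (hv : condLePr lam mu K κ s v) :
    condLeApr lam mu K κ v (unionC t v) := by
  have hXV := cdom_mono hv.1.1
  have hagree : ∀ i ∈ cdom t ∩ cdom v, t i = v i := fun i hi => by
    obtain ⟨b, hb⟩ := Option.isSome_iff_exists.mp
      (inter_cdom_subset_of_condLeApr_of_condLePr ht hv hi)
    rw [ht.1.1 i b hb, hv.1.1 i b hb]
  refine ⟨condLe_of_growClasses_subset (fun _ _ => unionC_of_right hagree)
    (fun τ => growClasses_mono fun i hg =>
      grows_of_grows_union_right ht.2 hv.2 hXV (cdom_unionC t v ▸ hg)) ht.1, fun i hi => ?_⟩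
  rcases cdom_unionC t v ▸ hi with hit | hiv
  · obtain ⟨m, hm, hms⟩ := ht.2 i hit
    exact ⟨m, hm, hXV hms⟩
  · exact ⟨i, mem_Ecl_self κ i, hiv⟩

end Conditions

theorem stmt8_general (lam mu : Cardinal) (K : Set Cardinal)
    (κ : Cardinal) (s t v : Cond)
    (ht : inQ lam mu K t) (hv : inQ lam mu K v)
    (h1 : condLeApr lam mu K κ s t) (h2 : condLePr lam mu K κ s v) :
    inQ lam mu K (unionC t v) ∧ condLe lam mu K s (unionC t v) ∧
      condLePr lam mu K κ t (unionC t v) ∧ condLeApr lam mu K κ v (unionC t v) ∧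
      (cdom t \ cdom s) ∩ (cdom v \ cdom s) = ∅ := by
  refine ⟨inQ_unionC ht hv, condLe_unionC h1.1 h2.1, condLePr_unionC h1 h2,
    condLeApr_unionC h1 h2, ?_⟩
  exact eq_empty_of_forall_notMem fun i ⟨⟨hit, his⟩, hiv, _⟩ =>
    his (inter_cdom_subset_of_condLeApr_of_condLePr h1 h2 ⟨hit, hiv⟩)

/-- amalgamation: if `s ≤apr_κ t` and `s ≤pr_κ v`, then `t ∪ v ∈ Q`,
`s ≤ t ∪ v`, `t ≤pr_κ t ∪ v`, `v ≤apr_κ t ∪ v`, and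
`dom t \ dom s` is disjoint from `dom v \ dom s`. -/
theorem stmt8 (lam mu : Cardinal) (K : Set Cardinal) (hctx : GroundCtx lam mu K)
    (κ : Cardinal) (hκ : κ ∈ K) (s t v : Cond)
    (hs : inQ lam mu K s) (ht : inQ lam mu K t) (hv : inQ lam mu K v)
    (h1 : condLeApr lam mu K κ s t) (h2 : condLePr lam mu K κ s v) :
    inQ lam mu K (unionC t v) ∧ condLe lam mu K s (unionC t v) ∧
      condLePr lam mu K κ t (unionC t v) ∧ condLeApr lam mu K κ v (unionC t v) ∧
      (cdom t \ cdom s) ∩ (cdom v \ cdom s) = ∅ :=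
  stmt8_general lam mu K κ s t v ht hv h1 h2
end
end

section
/- The forcing Q is λ-complete: if θ < λ and (q_i : i < θ) is ≤-increasing in Q, then q = ⋃{q_i : i < θ} ∈ Q and q_i ≤ q for all i < θ. -/
open Cardinal Set

noncomputable section

attribute [local instance] Classical.propDecidable

lemma theta_spec (lam : Cardinal) (K : Set Cardinal) (κ : Cardinal) :
    (theta lam K κ).IsRegular ∧ sSup ((K ∩ Set.Iio κ) ∪ {lam}) ≤ theta lam K κ := by
  have hne : {θ : Cardinal | θ.IsRegular ∧ sSup ((K ∩ Set.Iio κ) ∪ {lam}) ≤ θ}.Nonempty := by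
    refine ⟨Order.succ (sSup ((K ∩ Set.Iio κ) ∪ {lam}) ⊔ ℵ₀), ?_, ?_⟩
    · exact Cardinal.isRegular_succ le_sup_right
    · exact le_trans le_sup_left (Order.le_succ _)
  exact csInf_mem hne

lemma lam_le_theta (lam : Cardinal) (K : Set Cardinal) (κ : Cardinal) :
    lam ≤ theta lam K κ := by
  have hbdd : BddAbove ((K ∩ Set.Iio κ) ∪ {lam}) := by
    refine ⟨κ ⊔ lam, ?_⟩
    rintro x (⟨_, hx⟩ | rfl)
    · exact le_trans hx.le le_sup_left
    · exact le_sup_right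
  exact le_trans (le_csSup hbdd (Or.inr rfl)) (theta_spec lam K κ).2

lemma isRegular_lift_theta (lam : Cardinal) (K : Set Cardinal) (κ : Cardinal) :
    (Cardinal.lift.{1} (theta lam K κ)).IsRegular := by
  have h := (theta_spec lam K κ).1
  constructor
  · exact Cardinal.aleph0_le_lift.mpr h.1
  · rw [← Cardinal.lift_ord, ← Ordinal.lift_cof]
    exact Cardinal.lift_le.mpr h.2

/-- `Q` is `λ`-complete: the union of a `≤`-increasing sequence of
length `θ < λ` is in `Q` and extends every member of the sequence. -/
theorem stmt13 (lam mu : Cardinal) (K : Set Cardinal) (hctx : GroundCtx lam mu K)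
    (θ : Cardinal) (hθ : θ < lam)
    (f : Ordinal → Cond) (hfQ : ∀ i < θ.ord, inQ lam mu K (f i))
    (hmono : ∀ i j : Ordinal, i ≤ j → j < θ.ord → condLe lam mu K (f i) (f j)) :
    inQ lam mu K (unionFam f θ.ord) ∧
      ∀ i < θ.ord, condLe lam mu K (f i) (unionFam f θ.ord) := by
  set q := unionFam f θ.ord with hq
  -- coherence: q extends each f i pointwise
  have hcoh : ∀ i, i < θ.ord → ∀ ξ b, f i ξ = some b → q ξ = some b := by
    intro i hi ξ b hb
    have hex : ∃ j, j < θ.ord ∧ (f j ξ).isSome := ⟨i, hi, by rw [hb]; rfl⟩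
    rw [hq]
    show (if h : ∃ j, j < θ.ord ∧ (f j ξ).isSome then f h.choose ξ else none) = some b
    rw [dif_pos hex]
    obtain ⟨hj1, hj2⟩ := hex.choose_spec
    rcases le_total i hex.choose with h | h
    · exact (hmono i _ h hj1).1 ξ b hb
    · obtain ⟨b', hb'⟩ := Option.isSome_iff_exists.mp hj2
      have := (hmono _ i h hi).1 ξ b' hb'
      rw [this] at hb
      rw [hb', Option.some_inj.mp hb]
  -- domain of q is the union of the domains
  have hdom : cdom q = ⋃ j : Set.Iio θ.ord, cdom (f j) := by
    ext ξ
    simp only [cdom, mem_setOf_eq, mem_iUnion]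
    constructor
    · intro h
      by_cases hex : ∃ j, j < θ.ord ∧ (f j ξ).isSome
      · refine ⟨⟨hex.choose, hex.choose_spec.1⟩, ?_⟩
        have : q ξ = f hex.choose ξ := by
          rw [hq]
          show (if h : ∃ j, j < θ.ord ∧ (f j ξ).isSome then f h.choose ξ else none) = _
          rw [dif_pos hex]
        rwa [this] at h
      · exfalso
        have : q ξ = none := by
          rw [hq]
          show (if h : ∃ j, j < θ.ord ∧ (f j ξ).isSome then f h.choose ξ else none) = none
          rw [dif_neg hex]
        rw [this] at h; exact (Bool.false_ne_true (by simpa using h))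
    · rintro ⟨⟨j, hj⟩, hjs⟩
      obtain ⟨b, hb⟩ := Option.isSome_iff_exists.mp hjs
      rw [hcoh j hj ξ b hb]; rfl
  -- cardinality of the index set
  have hidx : ∀ κ ∈ K, #↥(Set.Iio θ.ord) < Cardinal.lift.{1} (theta lam K κ) := by
    intro κ _
    rw [Ordinal.mk_Iio_ordinal, Cardinal.card_ord, Cardinal.lift_lt]
    exact lt_of_lt_of_le hθ (lam_le_theta lam K κ)
  constructor
  · constructor
    · -- cdom q ⊆ Iio μ.ord
      intro ξ hξ
      rw [hdom] at hξ
      obtain ⟨⟨j, hj⟩, hjs⟩ := mem_iUnion.mp hξ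
      exact (hfQ j hj).1 hjs
    · -- smallness of E_κ-classes in dom q
      intro i hi κ hκ
      have hsub : Ecl κ i ∩ cdom q = ⋃ j : Set.Iio θ.ord, (Ecl κ i ∩ cdom (f j)) := by
        rw [hdom, Set.inter_iUnion]
      calc #↥(Ecl κ i ∩ cdom q) ≤ Cardinal.sum (fun j : Set.Iio θ.ord => #↥(Ecl κ i ∩ cdom (f j))) := by
              rw [hsub]; exact Cardinal.mk_iUnion_le_sum_mk
        _ < Cardinal.lift.{1} (theta lam K κ) :=
              Cardinal.sum_lt_of_isRegular (isRegular_lift_theta lam K κ) (hidx κ hκ)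
                (fun j => (hfQ j j.2).2 i hi κ hκ)
  · -- q extends each f i in the order
    intro i hi
    refine ⟨hcoh i hi, ?_⟩
    intro κ hκ
    have hsub : growClasses mu κ (cdom (f i)) (cdom q) ⊆
        ⋃ j : Set.Iio θ.ord, growClasses mu κ (cdom (f i)) (cdom (f (max i j))) := by
      rintro A ⟨⟨i0, hi0, hA⟩, hne, hneq⟩
      have hXY : cdom (f i) ⊆ cdom q := by
        intro ξ hξ
        obtain ⟨b, hb⟩ := Option.isSome_iff_exists.mp hξ
        show (q ξ).isSome
        rw [hcoh i hi ξ b hb]; rfl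
      have hss : A ∩ cdom (f i) ⊂ A ∩ cdom q :=
        (Set.inter_subset_inter_right A hXY).ssubset_of_ne hneq
      obtain ⟨ξ, hξY, hξX⟩ := Set.exists_of_ssubset hss
      obtain ⟨⟨j, hj⟩, hjs⟩ := mem_iUnion.mp (hdom ▸ hξY.2)
      refine mem_iUnion.mpr ⟨⟨j, hj⟩, ⟨i0, hi0, hA⟩, hne, ?_⟩
      have hj' : max i j < θ.ord := max_lt hi hj
      obtain ⟨b, hb⟩ := Option.isSome_iff_exists.mp hjs
      have hξ' : ξ ∈ cdom (f (max i j)) := by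
        show (f (max i j) ξ).isSome
        rw [(hmono j (max i j) (le_max_right i j) hj').1 ξ b hb]; rfl
      intro heq
      exact hξX (heq ▸ ⟨hξY.1, hξ'⟩)
    calc #↥(growClasses mu κ (cdom (f i)) (cdom q))
        ≤ #↥(⋃ j : Set.Iio θ.ord, growClasses mu κ (cdom (f i)) (cdom (f (max i j)))) :=
          Cardinal.mk_le_mk_of_subset hsub
      _ ≤ Cardinal.sum (fun j : Set.Iio θ.ord =>
            #↥(growClasses mu κ (cdom (f i)) (cdom (f (max i j))))) :=
          Cardinal.mk_iUnion_le_sum_mk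
      _ < Cardinal.lift.{1} (theta lam K κ) :=
          Cardinal.sum_lt_of_isRegular (isRegular_lift_theta lam K κ) (hidx κ hκ)
            (fun j => (hmono i (max i j) (le_max_left i j) (max_lt hi j.2)).2 κ hκ)
end
end
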